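/- Let R be the non-unital commutative ℂ-algebra with basis {t^α : α ∈ ℝ, α > 0} and multiplication t^α · t^β = t^{α+β}. Then R is quasi-unital: the canonical map R ⊗_R R → R is an isomorphism. -/

import Mathlib

open TensorProduct LinearMap

/-- The additive semigroup of positive real exponents. -/
abbrev PosReal := {x : ℝ // 0 < x}

/-- `R = ℂ[t^α | 0 < α ∈ ℝ]`: the non-unital commutative ℂ-algebra with basis
`{t^α : α > 0}` and multiplication `t^α · t^β = t^{α+β}`. -/
abbrev Rpos := AddMonoidAlgebra ℂ PosReal

/-- The bar differential `R ⊗ R ⊗ R → R ⊗ R`. -/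
noncomputable def barD : (Rpos ⊗[ℂ] (Rpos ⊗[ℂ] Rpos)) →ₗ[ℂ] Rpos ⊗[ℂ] Rpos :=
  (rTensor Rpos (mul' ℂ Rpos)) ∘ₗ (TensorProduct.assoc ℂ Rpos Rpos Rpos).symm.toLinearMap
    - lTensor Rpos (mul' ℂ Rpos)


/-!
Modulo the image of the bar differential `d`, the class of `t^α ⊗ t^β` depends only on `α + β`:
for `α < α'` and `y = α' - α`, `d(t^α ⊗ t^y ⊗ t^β') = t^{α'} ⊗ t^β' - t^α ⊗ t^{y+β'}`. So the
section `t^γ ↦ t^{γ/2} ⊗ t^{γ/2}` of the multiplication map is also its inverse modulo the image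
of `d`; the multiplication map is therefore surjective with kernel inside that image, which is
exactly bijectivity of the induced map on `R ⊗_R R`.
-/

theorem bijective_of_comp_mkQ_eq {R M P : Type*} [Ring R] [AddCommGroup M] [Module R M]
    [AddCommGroup P] [Module R P] {N : Submodule R M} {μ : M →ₗ[R] P} (f : M ⧸ N →ₗ[R] P)
    (hf : f ∘ₗ N.mkQ = μ) (hμ : Function.Surjective μ) (hker : ker μ ≤ N) :
    Function.Bijective f := by
  refine ⟨(injective_iff_map_eq_zero f).2 fun u hu => ?_, .of_comp (hf ▸ hμ)⟩
  obtain ⟨x, rfl⟩ := N.mkQ_surjective u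
  exact (Submodule.Quotient.mk_eq_zero N).2 (hker (by rwa [mem_ker, ← hf]))

namespace Rpos

local notation "𝐭" γ:max => (AddMonoidAlgebra.single γ (1 : ℂ) : Rpos)

theorem barD_tmul_tmul (a b c : Rpos) : barD (a ⊗ₜ (b ⊗ₜ c)) = (a * b) ⊗ₜ c - a ⊗ₜ (b * c) := by
  simp [barD, mul'_apply]

theorem add_tmul_smodEq (α y β : PosReal) :
    𝐭 (α + y) ⊗ₜ[ℂ] 𝐭 β ≡ 𝐭 α ⊗ₜ[ℂ] 𝐭 (y + β) [SMOD range barD] := by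
  rw [SModEq.sub_mem]
  refine ⟨𝐭 α ⊗ₜ (𝐭 y ⊗ₜ 𝐭 β), ?_⟩
  rw [barD_tmul_tmul, AddMonoidAlgebra.single_mul_single, AddMonoidAlgebra.single_mul_single,
    one_mul]

theorem tmul_smodEq_of_add_eq {α β α' β' : PosReal} (h : α + β = α' + β') :
    𝐭 α ⊗ₜ[ℂ] 𝐭 β ≡ 𝐭 α' ⊗ₜ[ℂ] 𝐭 β' [SMOD range barD] := by
  wlog hlt : α < α' generalizing α β α' β'
  · rcases (not_lt.1 hlt).lt_or_eq with hgt | rfl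
    · exact (this h.symm hgt).symm
    · rw [add_left_cancel h]
  have hsum : α.1 + β.1 = α'.1 + β'.1 := congrArg Subtype.val h
  set y : PosReal := ⟨α'.1 - α.1, sub_pos.2 hlt⟩
  have hα' : α + y = α' := Subtype.ext (by simp [y])
  have hβ : y + β' = β := Subtype.ext (by simp [y]; linarith)
  rw [← hα', ← hβ]
  exact (add_tmul_smodEq α y β').symm

noncomputable def half (γ : PosReal) : PosReal := ⟨γ.1 / 2, half_pos γ.2⟩

theorem half_add_half (γ : PosReal) : half γ + half γ = γ :=
  Subtype.ext (add_halves γ.1)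

noncomputable def halfSection : Rpos →ₗ[ℂ] Rpos ⊗[ℂ] Rpos :=
  Finsupp.linearCombination ℂ (fun γ => 𝐭 (half γ) ⊗ₜ[ℂ] 𝐭 (half γ)) ∘ₗ
    (AddMonoidAlgebra.coeffLinearEquiv ℂ).toLinearMap

theorem halfSection_single (γ : PosReal) (c : ℂ) :
    halfSection (AddMonoidAlgebra.single γ c) = c • 𝐭 (half γ) ⊗ₜ[ℂ] 𝐭 (half γ) :=
  Finsupp.linearCombination_single ℂ c γ

theorem mul'_halfSection (r : Rpos) : mul' ℂ Rpos (halfSection r) = r := by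
  suffices mul' ℂ Rpos ∘ₗ halfSection = LinearMap.id from LinearMap.congr_fun this r
  refine AddMonoidAlgebra.lhom_ext' fun γ => LinearMap.ext fun c => ?_
  simp [halfSection_single, AddMonoidAlgebra.single_mul_single, half_add_half]

theorem mkQ_halfSection_mul' :
    (range barD).mkQ ∘ₗ halfSection ∘ₗ mul' ℂ Rpos = (range barD).mkQ := by
  ext α β
  simp only [coe_comp, Function.comp_apply, AddMonoidAlgebra.lsingle_apply,
    AlgebraTensorModule.curry_apply, restrictScalars_self, curry_apply, mul'_apply,
    AddMonoidAlgebra.single_mul_single, mul_one, halfSection_single, one_smul,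
    Submodule.mkQ_apply]
  exact tmul_smodEq_of_add_eq (half_add_half _)

theorem ker_mul'_le_range_barD : ker (mul' ℂ Rpos) ≤ range barD := by
  intro x hx
  have := LinearMap.congr_fun mkQ_halfSection_mul' x
  rw [comp_apply, comp_apply, mem_ker.1 hx, map_zero, map_zero] at this
  exact (Submodule.Quotient.mk_eq_zero _).1 this.symm

end Rpos

theorem Rpos_quasiUnital :
    ∀ f : ((Rpos ⊗[ℂ] Rpos) ⧸ LinearMap.range barD) →ₗ[ℂ] Rpos,
      f ∘ₗ (LinearMap.range barD).mkQ = mul' ℂ Rpos → Function.Bijective f :=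
  fun f hf => bijective_of_comp_mkQ_eq f hf
    (fun r => ⟨Rpos.halfSection r, Rpos.mul'_halfSection r⟩) Rpos.ker_mul'_le_range_barD
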